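/- arXiv:1710.00095 — 4 statements merged into one kernel-verified Lean document; each statement's English description precedes it below -/
import Mathlib

section
/- Let A, B, C be non-negative real numbers with A ∈ (0,1). If a sequence of non-negative numbers {x_k}_{k≥0} satisfies x_{k+1}² ≤ [(1 − A)x_k + C]² + B² for every integer k ≥ 0, then for all integers k ≥ 0, x_k ≤ (1 − A)^k x₀ + C/A + B²/(C + √A · B). -/
/-!
The number `T = C/A + E`, with `E = B²/(C + √A·B)`, is a fixed-point bound for the recursion:
`((1 − A)T + C)² + B² ≤ T²`. Since `(1 − A)T + C = T − A·E`, this reduces to `√A·B ≤ C + A·E`,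
which after clearing the denominator is `0 ≤ C²`. Then `y_k = (1 − A)^k x₀ + T` is a supersolution
of the recursion, and induction gives `x_k ≤ y_k`.
-/

lemma add_sq_add_sq_le_add_sq {m a b t : ℝ} (hm : 0 ≤ m) (ht : 0 ≤ t)
    (h : a ^ 2 + b ^ 2 ≤ t ^ 2) : (m + a) ^ 2 + b ^ 2 ≤ (m + t) ^ 2 := by
  have hat : a ≤ t := (le_abs_self a).trans (abs_le_of_sq_le_sq (by nlinarith) ht)
  nlinarith [mul_le_mul_of_nonneg_left hat hm]

lemma le_pow_mul_add_of_sq_le_sq_add_sq {q B C T : ℝ} {x : ℕ → ℝ} (hq : 0 ≤ q) (hC : 0 ≤ C)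
    (hT : 0 ≤ T) (hx : ∀ k, 0 ≤ x k) (hfix : (q * T + C) ^ 2 + B ^ 2 ≤ T ^ 2)
    (hrec : ∀ k, x (k + 1) ^ 2 ≤ (q * x k + C) ^ 2 + B ^ 2) :
    ∀ k, x k ≤ q ^ k * x 0 + T := by
  intro k
  induction k with
  | zero => simp [hT]
  | succ k ih =>
    have hm : 0 ≤ q ^ (k + 1) * x 0 := mul_nonneg (pow_nonneg hq _) (hx 0)
    have hstep : q * x k + C ≤ q ^ (k + 1) * x 0 + (q * T + C) := by
      rw [pow_succ']
      nlinarith [mul_le_mul_of_nonneg_left ih hq]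
    refine le_of_pow_le_pow_left₀ two_ne_zero (by positivity) ?_
    calc x (k + 1) ^ 2 ≤ (q * x k + C) ^ 2 + B ^ 2 := hrec k
      _ ≤ (q ^ (k + 1) * x 0 + (q * T + C)) ^ 2 + B ^ 2 := by
        gcongr
        exact add_nonneg (mul_nonneg hq (hx k)) hC
      _ ≤ (q ^ (k + 1) * x 0 + T) ^ 2 := add_sq_add_sq_le_add_sq hm hT hfix

lemma sqrt_mul_le_add_mul_div {A B C : ℝ} (hA : 0 ≤ A) (hB : 0 ≤ B) (hC : 0 ≤ C) :
    Real.sqrt A * B ≤ C + A * (B ^ 2 / (C + Real.sqrt A * B)) := by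
  have hs : 0 ≤ Real.sqrt A * B := mul_nonneg (Real.sqrt_nonneg A) hB
  rcases (add_nonneg hC hs).eq_or_lt with hden | hden
  · rw [← hden]
    simp only [div_zero, mul_zero, add_zero]
    linarith
  have hsq : Real.sqrt A ^ 2 = A := Real.sq_sqrt hA
  have hdiff : C + A * (B ^ 2 / (C + Real.sqrt A * B)) - Real.sqrt A * B
      = C ^ 2 / (C + Real.sqrt A * B) := by
    rw [eq_div_iff hden.ne']
    linear_combination A * div_mul_cancel₀ (B ^ 2) hden.ne' - B ^ 2 * hsq
  rw [← sub_nonneg, hdiff]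
  positivity

lemma sq_one_sub_mul_add_add_sq_le_sq {A B C : ℝ} (hA : 0 < A) (hA1 : A ≤ 1) (hB : 0 ≤ B) (hC : 0 ≤ C) :
    ((1 - A) * (C / A + B ^ 2 / (C + Real.sqrt A * B)) + C) ^ 2 + B ^ 2
      ≤ (C / A + B ^ 2 / (C + Real.sqrt A * B)) ^ 2 := by
  set E := B ^ 2 / (C + Real.sqrt A * B)
  have hE0 : 0 ≤ E := by positivity
  have hEden : E * (C + Real.sqrt A * B) = B ^ 2 :=
    div_mul_cancel_of_imp fun h => by nlinarith [Real.sqrt_pos.mpr hA]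
  have hkey : Real.sqrt A * B ≤ C + A * E := sqrt_mul_le_add_mul_div hA.le hB hC
  have hshift : (1 - A) * (C / A + E) + C = C / A + E - A * E := by
    field_simp
    ring
  rw [hshift]
  -- `T² − (T − A E)² = E (2C + A(2 − A)E) ≥ E (C + √A B) = B²`
  nlinarith [mul_le_mul_of_nonneg_left hkey hE0, mul_nonneg (mul_nonneg hA.le (sub_nonneg.2 hA1))
    (sq_nonneg E), mul_nonneg hE0 hC]

/-- **Lemma (recursive inequality).** Let `A, B, C` be non-negative real numbers with
`A ∈ (0,1)`. If a sequence of non-negative numbers `x_k` satisfies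
`x_{k+1}² ≤ [(1 − A)x_k + C]² + B²` for every `k ≥ 0`, then for all `k ≥ 0`,
`x_k ≤ (1 − A)^k x₀ + C/A + B²/(C + √A · B)`. -/
theorem recursive_inequality_lemma
    (A B C : ℝ) (hA : 0 < A) (hA1 : A < 1) (hB : 0 ≤ B) (hC : 0 ≤ C)
    (x : ℕ → ℝ) (hx : ∀ k, 0 ≤ x k)
    (hrec : ∀ k : ℕ, (x (k + 1)) ^ 2 ≤ ((1 - A) * x k + C) ^ 2 + B ^ 2) :
    ∀ k : ℕ, x k ≤ (1 - A) ^ k * x 0 + C / A + B ^ 2 / (C + Real.sqrt A * B) := by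
  intro k
  rw [add_assoc]
  exact le_pow_mul_add_of_sq_le_sq_add_sq (sub_nonneg.2 hA1.le) hC (by positivity) hx
    (sq_one_sub_mul_add_add_sq_le_sq hA hA1.le hB hC) hrec k
end

section
/- If f: ℝ^p → ℝ is continuously differentiable with M-Lipschitz gradient, e^{−f} is integrable, and π is the probability density proportional to e^{−f}, then ∫_{ℝ^p} ‖∇f(x)‖₂² π(x) dx ≤ M p. -/
/-!
Fix a step `t > 0` with `t * M < 1`. The gradient step `T x = x - t • ∇f x` is antilipschitz with
constant `(1 - t M)⁻¹`, so it expands Lebesgue measure by at most `(1 - t M)⁻ᵖ`, whence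
`∫ e^{-f ∘ T} ≤ (1 - t M)⁻ᵖ ∫ e^{-f}`. The descent lemma gives
`f (T x) ≤ f x - t (1 - M t / 2) ‖∇f x‖²`, hence `(1 + t (1 - M t / 2) ‖∇f x‖²) e^{-f x} ≤ e^{-f (T x)}`.
Integrating, `t (1 - M t / 2) ∫ ‖∇f‖² e^{-f} ≤ ((1 - t M)⁻ᵖ - 1) ∫ e^{-f}`; dividing by `t` and
letting `t → 0⁺` turns the right-hand side into `M p ∫ e^{-f}`.
-/

open MeasureTheory Set Filter Module
open scoped ENNReal NNReal Topology InnerProductSpace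

section LipschitzGradient

variable {F : Type*} [NormedAddCommGroup F] [InnerProductSpace ℝ F] [CompleteSpace F]
  {f : F → ℝ} {K : ℝ≥0}

theorem apply_add_le_of_lipschitzWith_gradient (hf : Differentiable ℝ f)
    (hL : LipschitzWith K (gradient f)) (x v : F) :
    f (x + v) ≤ f x + ⟪gradient f x, v⟫_ℝ + K / 2 * ‖v‖ ^ 2 := by
  set φ : ℝ → ℝ := fun s => f (x + s • v) - s * ⟪gradient f x, v⟫_ℝ - K / 2 * s ^ 2 * ‖v‖ ^ 2
  have hφ' : ∀ s : ℝ, HasDerivAt φ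
      (⟪gradient f (x + s • v), v⟫_ℝ - ⟪gradient f x, v⟫_ℝ - K * s * ‖v‖ ^ 2) s := by
    intro s
    have hline : HasDerivAt (fun s : ℝ => x + s • v) v s := by
      simpa using ((hasDerivAt_id s).smul_const v).const_add x
    have hcomp := (hf (x + s • v)).hasFDerivAt.comp_hasDerivAt s hline
    rw [← inner_gradient_left] at hcomp
    have h := (hcomp.sub ((hasDerivAt_id s).mul_const ⟪gradient f x, v⟫_ℝ)).sub
      (((hasDerivAt_pow 2 s).const_mul (K / 2 : ℝ)).mul_const (‖v‖ ^ 2))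
    exact h.congr_deriv (by push_cast; ring)
  have hφ'_nonpos : ∀ s, 0 ≤ s →
      ⟪gradient f (x + s • v), v⟫_ℝ - ⟪gradient f x, v⟫_ℝ - K * s * ‖v‖ ^ 2 ≤ 0 := by
    intro s hs
    rw [sub_nonpos]
    have hlip : ‖gradient f (x + s • v) - gradient f x‖ ≤ K * (s * ‖v‖) := by
      simpa [dist_eq_norm, norm_smul, abs_of_nonneg hs] using hL.dist_le_mul (x + s • v) x
    calc ⟪gradient f (x + s • v), v⟫_ℝ - ⟪gradient f x, v⟫_ℝ
        = ⟪gradient f (x + s • v) - gradient f x, v⟫_ℝ := (inner_sub_left _ _ _).symm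
      _ ≤ ‖gradient f (x + s • v) - gradient f x‖ * ‖v‖ := real_inner_le_norm _ _
      _ ≤ K * (s * ‖v‖) * ‖v‖ := by gcongr
      _ = K * s * ‖v‖ ^ 2 := by ring
  have hanti : AntitoneOn φ (Ici 0) :=
    antitoneOn_of_hasDerivWithinAt_nonpos (convex_Ici 0)
      (fun s _ => (hφ' s).continuousAt.continuousWithinAt)
      (fun s _ => (hφ' s).hasDerivWithinAt)
      (fun s hs => hφ'_nonpos s (interior_subset hs))
  have hφ01 := hanti (mem_Ici.2 le_rfl) (mem_Ici.2 zero_le_one) zero_le_one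
  norm_num [φ] at hφ01
  rw [inner_gradient_left]
  linarith

theorem apply_sub_smul_gradient_le (hf : Differentiable ℝ f)
    (hL : LipschitzWith K (gradient f)) (x : F) (t : ℝ) :
    f (x - t • gradient f x) ≤ f x - t * (1 - K * t / 2) * ‖gradient f x‖ ^ 2 := by
  have h := apply_add_le_of_lipschitzWith_gradient hf hL x (-(t • gradient f x))
  rw [← sub_eq_add_neg, inner_neg_right, real_inner_smul_right, real_inner_self_eq_norm_sq,
    norm_neg, norm_smul, mul_pow, Real.norm_eq_abs, sq_abs] at h
  linarith

theorem one_add_mul_sq_norm_gradient_mul_exp_le (hf : Differentiable ℝ f)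
    (hL : LipschitzWith K (gradient f)) (x : F) (t : ℝ) :
    (1 + t * (1 - K * t / 2) * ‖gradient f x‖ ^ 2) * Real.exp (-f x) ≤
      Real.exp (-f (x - t • gradient f x)) :=
  calc (1 + t * (1 - K * t / 2) * ‖gradient f x‖ ^ 2) * Real.exp (-f x)
      ≤ Real.exp (t * (1 - K * t / 2) * ‖gradient f x‖ ^ 2) * Real.exp (-f x) := by
        gcongr
        linarith [Real.add_one_le_exp (t * (1 - K * t / 2) * ‖gradient f x‖ ^ 2)]
    _ ≤ Real.exp (-f (x - t • gradient f x)) := by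
        rw [← Real.exp_add]
        gcongr
        linarith [apply_sub_smul_gradient_le hf hL x t]

end LipschitzGradient

theorem LipschitzWith.antilipschitzWith_sub_smul {E : Type*} [NormedAddCommGroup E]
    [NormedSpace ℝ E] {g : E → E} {K : ℝ≥0} (hg : LipschitzWith K g) {t : ℝ} (ht : 0 ≤ t)
    (htK : t * K < 1) : AntilipschitzWith (1 - t * K)⁻¹.toNNReal fun x => x - t • g x := by
  refine AntilipschitzWith.of_le_mul_dist fun x y => ?_
  have hpos : 0 < 1 - t * K := sub_pos.2 htK
  rw [Real.coe_toNNReal _ (inv_nonneg.2 hpos.le), inv_mul_eq_div, le_div_iff₀ hpos]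
  have htri := dist_add_add_le (x - t • g x) (t • g x) (y - t • g y) (t • g y)
  rw [sub_add_cancel, sub_add_cancel] at htri
  calc dist x y * (1 - t * K) = dist x y - t * (K * dist x y) := by ring
    _ ≤ dist x y - dist (t • g x) (t • g y) := by
      rw [dist_smul₀, Real.norm_of_nonneg ht]
      gcongr
      exact hg.dist_le_mul x y
    _ ≤ dist (x - t • g x) (y - t • g y) := by linarith

section Haar

variable {E : Type*} [NormedAddCommGroup E] [NormedSpace ℝ E] [FiniteDimensional ℝ E]
  [MeasurableSpace E] [BorelSpace E] (μ : Measure E) [μ.IsAddHaarMeasure] {K : ℝ≥0} {T : E → E}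

theorem AntilipschitzWith.addHaar_preimage_le (hT : AntilipschitzWith K T) (s : Set E) :
    μ (T ⁻¹' s) ≤ (K : ℝ≥0∞) ^ finrank ℝ E * μ s := by
  rw [μ.isAddLeftInvariant_eq_smul μH[finrank ℝ E]]
  simp only [Measure.smul_apply, ENNReal.smul_def, smul_eq_mul]
  rw [mul_left_comm]
  gcongr
  simpa using hT.hausdorffMeasure_preimage_le (Nat.cast_nonneg _) s

theorem AntilipschitzWith.lintegral_comp_le (hT : AntilipschitzWith K T) (hTm : Measurable T)
    {g : E → ℝ≥0∞} (hg : Measurable g) :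
    ∫⁻ x, g (T x) ∂μ ≤ (K : ℝ≥0∞) ^ finrank ℝ E * ∫⁻ x, g x ∂μ := by
  rw [← lintegral_map hg hTm, ← smul_eq_mul, ← lintegral_smul_measure]
  refine lintegral_mono' (Measure.le_iff.2 fun s hs => ?_) le_rfl
  rw [Measure.map_apply hTm hs]
  exact hT.addHaar_preimage_le μ s

end Haar

theorem tendsto_inv_one_sub_mul_pow_sub_one_div (K : ℝ) (n : ℕ) :
    Tendsto (fun t : ℝ => ((1 - t * K)⁻¹ ^ n - 1) / (t * (1 - K * t / 2))) (𝓝[≠] 0)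
      (𝓝 (K * n)) := by
  set F : ℝ → ℝ := fun t => (1 - t * K)⁻¹ ^ n
  have hF : HasDerivAt F (K * n) 0 := by
    have hlin : HasDerivAt (fun t : ℝ => 1 - t * K) (-K) 0 := by
      simpa using ((hasDerivAt_id (0 : ℝ)).mul_const K).const_sub 1
    exact ((hlin.inv (by simp)).pow n).congr_deriv (by simp [mul_comm])
  have hcorr : Tendsto (fun t : ℝ => (1 - K * t / 2)⁻¹) (𝓝[≠] 0) (𝓝 1) := by
    have : ContinuousAt (fun t : ℝ => (1 - K * t / 2)⁻¹) 0 :=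
      ContinuousAt.inv₀ (by fun_prop) (by simp)
    simpa using this.tendsto.mono_left nhdsWithin_le_nhds
  convert (hasDerivAt_iff_tendsto_slope.mp hF).mul hcorr using 2 with t
  · simp [F, slope_def_field, div_eq_mul_inv]
    ring
  · ring

section Gibbs

variable {F : Type*} [NormedAddCommGroup F] [InnerProductSpace ℝ F] [FiniteDimensional ℝ F]
  [MeasurableSpace F] [BorelSpace F] (μ : Measure F) [μ.IsAddHaarMeasure]
  {f : F → ℝ} {K : ℝ≥0}

theorem lintegral_sq_norm_gradient_mul_exp_le_of_step (hf : Differentiable ℝ f)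
    (hL : LipschitzWith K (gradient f)) (hZ : ∫⁻ x, ENNReal.ofReal (Real.exp (-f x)) ∂μ ≠ ∞)
    {t : ℝ} (ht : 0 < t) (htK : t * K < 1) :
    ∫⁻ x, ENNReal.ofReal (‖gradient f x‖ ^ 2 * Real.exp (-f x)) ∂μ ≤
      ENNReal.ofReal (((1 - t * K)⁻¹ ^ finrank ℝ F - 1) / (t * (1 - K * t / 2))) *
        ∫⁻ x, ENNReal.ofReal (Real.exp (-f x)) ∂μ := by
  set c := t * (1 - K * t / 2)
  set A := (1 - t * K)⁻¹ ^ finrank ℝ F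
  set Z := ∫⁻ x, ENNReal.ofReal (Real.exp (-f x)) ∂μ
  set I := ∫⁻ x, ENNReal.ofReal (‖gradient f x‖ ^ 2 * Real.exp (-f x)) ∂μ
  have hc : 0 < c := mul_pos ht (by nlinarith)
  have hA : 1 ≤ A := one_le_pow₀ ((one_le_inv₀ (by linarith)).2 (by nlinarith))
  have hW : Measurable fun x => ENNReal.ofReal (Real.exp (-f x)) :=
    (hf.continuous.neg.rexp).measurable.ennreal_ofReal
  have hT : Measurable fun x => x - t • gradient f x :=
    (continuous_id.sub (continuous_const.smul hL.continuous)).measurable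
  have hchain : Z + ENNReal.ofReal c * I ≤ ENNReal.ofReal A * Z :=
    calc Z + ENNReal.ofReal c * I
        = ∫⁻ x, ENNReal.ofReal ((1 + c * ‖gradient f x‖ ^ 2) * Real.exp (-f x)) ∂μ := by
          rw [← lintegral_const_mul' _ _ ENNReal.ofReal_ne_top, ← lintegral_add_left hW]
          refine lintegral_congr fun x => ?_
          rw [← ENNReal.ofReal_mul hc.le, ← ENNReal.ofReal_add (Real.exp_pos _).le (by positivity)]
          ring_nf
      _ ≤ ∫⁻ x, ENNReal.ofReal (Real.exp (-f (x - t • gradient f x))) ∂μ :=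
          lintegral_mono fun x =>
            ENNReal.ofReal_le_ofReal (one_add_mul_sq_norm_gradient_mul_exp_le hf hL x t)
      _ ≤ ENNReal.ofReal A * Z := by
          have h := (hL.antilipschitzWith_sub_smul ht.le htK).lintegral_comp_le μ hT hW
          rwa [ENNReal.ofReal_pow (by positivity)]
  have hcancel : ENNReal.ofReal c * I ≤ ENNReal.ofReal (A - 1) * Z := by
    rw [← ENNReal.add_le_add_iff_left hZ]
    calc Z + ENNReal.ofReal c * I ≤ ENNReal.ofReal A * Z := hchain
      _ = Z + ENNReal.ofReal (A - 1) * Z := by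
        rw [← one_add_mul, ← ENNReal.ofReal_one, ← ENNReal.ofReal_add zero_le_one (by linarith),
          add_sub_cancel]
  calc I = ENNReal.ofReal c⁻¹ * (ENNReal.ofReal c * I) := by
        rw [← mul_assoc, ← ENNReal.ofReal_mul (by positivity), inv_mul_cancel₀ hc.ne',
          ENNReal.ofReal_one, one_mul]
    _ ≤ ENNReal.ofReal c⁻¹ * (ENNReal.ofReal (A - 1) * Z) := by gcongr
    _ = ENNReal.ofReal ((A - 1) / c) * Z := by
        rw [← mul_assoc, ← ENNReal.ofReal_mul (by positivity), inv_mul_eq_div]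

theorem lintegral_sq_norm_gradient_mul_exp_le (hf : Differentiable ℝ f)
    (hL : LipschitzWith K (gradient f)) (hZ : ∫⁻ x, ENNReal.ofReal (Real.exp (-f x)) ∂μ ≠ ∞) :
    ∫⁻ x, ENNReal.ofReal (‖gradient f x‖ ^ 2 * Real.exp (-f x)) ∂μ ≤
      ENNReal.ofReal (K * finrank ℝ F) * ∫⁻ x, ENNReal.ofReal (Real.exp (-f x)) ∂μ := by
  have hlim := (tendsto_inv_one_sub_mul_pow_sub_one_div K (finrank ℝ F)).mono_left
    (nhdsGT_le_nhdsNE (0 : ℝ))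
  refine ge_of_tendsto (ENNReal.Tendsto.mul_const (ENNReal.tendsto_ofReal hlim) (Or.inr hZ)) ?_
  have hsmall : ∀ᶠ t in 𝓝[>] (0 : ℝ), t * (K : ℝ) < 1 := by
    have h0 : Tendsto (fun t : ℝ => t * K) (𝓝 0) (𝓝 0) := by
      simpa using (continuous_mul_const (K : ℝ)).tendsto 0
    exact (h0.mono_left nhdsWithin_le_nhds).eventually_lt_const zero_lt_one
  filter_upwards [self_mem_nhdsWithin, hsmall] with t ht htK
  exact lintegral_sq_norm_gradient_mul_exp_le_of_step μ hf hL hZ ht htK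

end Gibbs

theorem integral_withDensity_div_integral_le {X : Type*} [MeasurableSpace X] {μ : Measure X}
    {g w : X → ℝ} (hg : Measurable g) (hg0 : 0 ≤ g) (hw : Measurable w) (hw0 : 0 ≤ w)
    (hwi : Integrable w μ) {C : ℝ} (hC : 0 ≤ C)
    (h : ∫⁻ x, ENNReal.ofReal (g x * w x) ∂μ ≤ ENNReal.ofReal C * ∫⁻ x, ENNReal.ofReal (w x) ∂μ) :
    ∫ x, g x ∂μ.withDensity (fun x => ENNReal.ofReal (w x / ∫ y, w y ∂μ)) ≤ C := by
  set Z := ∫ y, w y ∂μ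
  have hZ0 : 0 ≤ Z := integral_nonneg hw0
  have hZ : ENNReal.ofReal Z = ∫⁻ x, ENNReal.ofReal (w x) ∂μ :=
    ofReal_integral_eq_lintegral_ofReal hwi (ae_of_all _ hw0)
  rw [integral_eq_lintegral_of_nonneg_ae (ae_of_all _ hg0) hg.aestronglyMeasurable,
    lintegral_withDensity_eq_lintegral_mul _ (by fun_prop) (by fun_prop)]
  refine ENNReal.toReal_le_of_le_ofReal hC ?_
  calc ∫⁻ x, (fun x => ENNReal.ofReal (w x / Z) * ENNReal.ofReal (g x)) x ∂μ
      = ENNReal.ofReal Z⁻¹ * ∫⁻ x, ENNReal.ofReal (g x * w x) ∂μ := by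
        rw [← lintegral_const_mul' _ _ ENNReal.ofReal_ne_top]
        refine lintegral_congr fun x => ?_
        rw [← ENNReal.ofReal_mul (div_nonneg (hw0 x) hZ0), ← ENNReal.ofReal_mul (inv_nonneg.2 hZ0)]
        ring_nf
    _ ≤ ENNReal.ofReal Z⁻¹ * (ENNReal.ofReal C * ENNReal.ofReal Z) := by rw [hZ]; gcongr
    _ = ENNReal.ofReal (C * (Z⁻¹ * Z)) := by
        rw [ENNReal.ofReal_mul hC, ENNReal.ofReal_mul (inv_nonneg.2 hZ0)]
        ring
    _ ≤ ENNReal.ofReal C := ENNReal.ofReal_le_ofReal (mul_le_of_le_one_right hC inv_mul_le_one)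

theorem integral_sq_norm_gradient_le_general
    {p : ℕ} (M : ℝ) (hM : 0 < M)
    (f : EuclideanSpace ℝ (Fin p) → ℝ) (hf : ContDiff ℝ 1 f)
    (hlip : ∀ x y : EuclideanSpace ℝ (Fin p),
      ‖gradient f x - gradient f y‖ ≤ M * ‖x - y‖)
    (hint : Integrable (fun x : EuclideanSpace ℝ (Fin p) => Real.exp (-f x)) volume)
    (π : Measure (EuclideanSpace ℝ (Fin p)))
    (hπ : π = volume.withDensity fun x =>
      ENNReal.ofReal (Real.exp (-f x) / ∫ y : EuclideanSpace ℝ (Fin p), Real.exp (-f y))) :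
    ∫ x, ‖gradient f x‖ ^ 2 ∂π ≤ M * p := by
  have hL : LipschitzWith (⟨M, hM.le⟩ : ℝ≥0) (gradient f) :=
    LipschitzWith.of_dist_le_mul fun x y => by
      rw [dist_eq_norm, dist_eq_norm]
      exact hlip x y
  have hdiff : Differentiable ℝ f := hf.differentiable one_ne_zero
  have hbound := lintegral_sq_norm_gradient_mul_exp_le volume hdiff hL hint.lintegral_lt_top.ne
  rw [finrank_euclideanSpace_fin] at hbound
  subst hπ
  have hfc := hdiff.continuous
  have hGc := hL.continuous
  exact integral_withDensity_div_integral_le (by fun_prop : Continuous _).measurable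
    (fun x => by positivity) (by fun_prop : Continuous _).measurable (fun x => by positivity)
    hint (by positivity) hbound

/-- **Lemma.** If `f : ℝ^p → ℝ` is continuously differentiable with `M`-Lipschitz gradient,
`e^{−f}` is integrable, and `π` is the probability density proportional to `e^{−f}`,
then `∫ ‖∇f(x)‖₂² π(x) dx ≤ M p`. -/
theorem integral_sq_norm_gradient_le
    {p : ℕ} (hp : 0 < p) (M : ℝ) (hM : 0 < M)
    (f : EuclideanSpace ℝ (Fin p) → ℝ) (hf : ContDiff ℝ 1 f)
    (hlip : ∀ x y : EuclideanSpace ℝ (Fin p),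
      ‖gradient f x - gradient f y‖ ≤ M * ‖x - y‖)
    (hint : Integrable (fun x : EuclideanSpace ℝ (Fin p) => Real.exp (-f x)) volume)
    (π : Measure (EuclideanSpace ℝ (Fin p)))
    (hπ : π = volume.withDensity fun x =>
      ENNReal.ofReal (Real.exp (-f x) / ∫ y : EuclideanSpace ℝ (Fin p), Real.exp (-f y))) :
    ∫ x, ‖gradient f x‖ ^ 2 ∂π ≤ M * p :=
  integral_sq_norm_gradient_le_general M hM f hf hlip hint π hπ
end

section
/- Let A, B, C be non-negative real numbers with A ∈ (0,1), and suppose a sequence of non-negative reals {x_k}_{k≥0} satisfies x_{k+1}² ≤ [(1 − A)x_k + C]² + B² for every integer k ≥ 0. Define E = [(1−A)C + {C² + (2A − A²)B²}^{1/2}]/(2A − A²) and D = {[(1−A)E + C]² + B²}^{1/2} − (1−A)E. Then E ≥ (1−A)C/(A(2−A)) + B/√(A(2−A)), D ≤ C + B²A/(C + √(A(2−A))·B), and for all integers k ≥ 0: x_k ≤ (1−A)^k x₀ + D/A ≤ (1−A)^k x₀ + C/A + B²/(C + √(A(2−A))·B). -/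
/-!
The map `f y = √(((1 - A) y + C)² + B²)` has `E` as its positive fixed point, and since
`√((u + v)² + B²) ≤ u + √(v² + B²)` for `u ≥ 0`, the recursion propagates
`x_k ≤ (1 - A)^k x₀ + E` by induction; moreover `D = f E - (1 - A) E = A E`. The two explicit
bounds on `E` come from `r B ≤ √(C² + r² B²) ≤ C + r² B² / (C + r B)` with `r = √(A (2 - A))`.
-/

open Real Function

theorem sqrt_add_sq_add_sq_le {u : ℝ} (hu : 0 ≤ u) (v b : ℝ) :
    √((u + v) ^ 2 + b ^ 2) ≤ u + √(v ^ 2 + b ^ 2) := by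
  have hv : v ≤ √(v ^ 2 + b ^ 2) :=
    (le_abs_self v).trans <| (sqrt_sq_eq_abs v).symm.trans_le <|
      sqrt_le_sqrt (le_add_of_nonneg_right (sq_nonneg b))
  have hsq : √(v ^ 2 + b ^ 2) ^ 2 = v ^ 2 + b ^ 2 := sq_sqrt (by positivity)
  rw [sqrt_le_iff]
  exact ⟨by positivity, by nlinarith [mul_le_mul_of_nonneg_left hv hu]⟩

theorem sqrt_sq_add_sq_sub_le {c b : ℝ} (hc : 0 ≤ c) (hb : 0 ≤ b) :
    √(c ^ 2 + b ^ 2) - c ≤ b ^ 2 / (c + b) := by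
  rcases (add_nonneg hc hb).eq_or_lt with hcb | hcb
  · obtain ⟨rfl, rfl⟩ : c = 0 ∧ b = 0 := ⟨by linarith, by linarith⟩
    simp
  have hbt : b ≤ √(c ^ 2 + b ^ 2) :=
    le_sqrt_of_sq_le (le_add_of_nonneg_left (sq_nonneg c))
  have hsq : √(c ^ 2 + b ^ 2) ^ 2 = c ^ 2 + b ^ 2 := sq_sqrt (by positivity)
  -- `t = √(c² + b²)` satisfies `(t - c)(t + c) = b²` and `t + c ≥ c + b`
  rw [le_div_iff₀ hcb]
  nlinarith [sqrt_nonneg (c ^ 2 + b ^ 2)]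

theorem le_pow_mul_add_of_isFixedPt {a B C E : ℝ} (ha : 0 ≤ a) (hC : 0 ≤ C)
    (hfix : IsFixedPt (fun y ↦ √((a * y + C) ^ 2 + B ^ 2)) E) {x : ℕ → ℝ} (hx : ∀ k, 0 ≤ x k)
    (hrec : ∀ k, x (k + 1) ^ 2 ≤ (a * x k + C) ^ 2 + B ^ 2) (k : ℕ) :
    x k ≤ a ^ k * x 0 + E := by
  have hE : √((a * E + C) ^ 2 + B ^ 2) = E := hfix
  induction k with
  | zero => simpa using hE ▸ sqrt_nonneg _
  | succ k ih =>
    have hstep : a * x k + C ≤ a ^ (k + 1) * x 0 + (a * E + C) := by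
      rw [pow_succ']
      nlinarith [mul_le_mul_of_nonneg_left ih ha]
    have hxk : 0 ≤ a * x k + C := by nlinarith [hx k]
    calc x (k + 1) ≤ √((a * x k + C) ^ 2 + B ^ 2) := le_sqrt_of_sq_le (hrec k)
      _ ≤ √((a ^ (k + 1) * x 0 + (a * E + C)) ^ 2 + B ^ 2) := by gcongr
      _ ≤ a ^ (k + 1) * x 0 + √((a * E + C) ^ 2 + B ^ 2) :=
        sqrt_add_sq_add_sq_le (mul_nonneg (pow_nonneg ha _) (hx 0)) _ _
      _ = a ^ (k + 1) * x 0 + E := by rw [hE]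

namespace RecursiveInequality

variable {A B C E : ℝ}

theorem isFixedPt (hA : 0 < A) (hA2 : A < 2) (hC : 0 ≤ C)
    (hE : E = ((1 - A) * C + √(C ^ 2 + (2 * A - A ^ 2) * B ^ 2)) / (2 * A - A ^ 2)) :
    IsFixedPt (fun y ↦ √(((1 - A) * y + C) ^ 2 + B ^ 2)) E := by
  set t := √(C ^ 2 + (2 * A - A ^ 2) * B ^ 2)
  have hs : 0 < 2 * A - A ^ 2 := by nlinarith
  have ht : t ^ 2 = C ^ 2 + (2 * A - A ^ 2) * B ^ 2 := sq_sqrt (by positivity)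
  have htC : C ≤ t := le_sqrt_of_sq_le (by nlinarith)
  have hEs : (2 * A - A ^ 2) * E = (1 - A) * C + t := by rw [hE, mul_div_cancel₀ _ hs.ne']
  have hE0 : 0 ≤ E := by
    rw [hE]
    exact div_nonneg (by nlinarith [mul_nonneg (by linarith : (0 : ℝ) ≤ 2 - A) hC]) hs.le
  have hsq : ((1 - A) * E + C) ^ 2 + B ^ 2 = E ^ 2 :=
    mul_left_cancel₀ hs.ne' <| by
      linear_combination ((1 - A) * C - t - (2 * A - A ^ 2) * E) * hEs - ht
  show √(((1 - A) * E + C) ^ 2 + B ^ 2) = E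
  rw [hsq, sqrt_sq hE0]

theorem lower_bound (hA : 0 < A) (hA2 : A < 2)
    (hE : E = ((1 - A) * C + √(C ^ 2 + (2 * A - A ^ 2) * B ^ 2)) / (2 * A - A ^ 2)) :
    (1 - A) * C / (A * (2 - A)) + B / √(A * (2 - A)) ≤ E := by
  rw [show 2 * A - A ^ 2 = A * (2 - A) by ring] at hE
  set r := √(A * (2 - A))
  have hs : 0 < A * (2 - A) := by nlinarith
  have hr : r ^ 2 = A * (2 - A) := sq_sqrt hs.le
  have hrB : r * B ≤ √(C ^ 2 + A * (2 - A) * B ^ 2) := le_sqrt_of_sq_le (by nlinarith)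
  calc (1 - A) * C / (A * (2 - A)) + B / r = ((1 - A) * C + r * B) / (A * (2 - A)) := by
        rw [add_div, ← hr]; field_simp
    _ ≤ E := by rw [hE]; gcongr

theorem upper_bound (hA : 0 < A) (hA2 : A < 2) (hB : 0 ≤ B) (hC : 0 ≤ C)
    (hE : E = ((1 - A) * C + √(C ^ 2 + (2 * A - A ^ 2) * B ^ 2)) / (2 * A - A ^ 2)) :
    E ≤ C / A + B ^ 2 / (C + √(A * (2 - A)) * B) := by
  rw [show 2 * A - A ^ 2 = A * (2 - A) by ring] at hE
  set r := √(A * (2 - A))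
  have hs : 0 < A * (2 - A) := by nlinarith
  have hr : r ^ 2 = A * (2 - A) := sq_sqrt hs.le
  have ht : √(C ^ 2 + A * (2 - A) * B ^ 2) - C ≤ A * (2 - A) * (B ^ 2 / (C + r * B)) := by
    have := sqrt_sq_add_sq_sub_le hC (mul_nonneg (sqrt_nonneg (A * (2 - A))) hB)
    rwa [mul_pow, hr, mul_div_assoc] at this
  have hCA : C / A * (A * (2 - A)) = (2 - A) * C := by field_simp
  rw [hE, div_le_iff₀ hs, add_mul, hCA]
  linarith

end RecursiveInequality

/-- **Lemma (refined recursive inequality).** Let `A, B, C` be non-negative reals with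
`A ∈ (0,1)` and suppose a sequence of non-negative reals `x_k` satisfies
`x_{k+1}² ≤ [(1 − A)x_k + C]² + B²` for every `k ≥ 0`.  With
`E = [(1−A)C + {C² + (2A − A²)B²}^{1/2}]/(2A − A²)` and
`D = {[(1−A)E + C]² + B²}^{1/2} − (1−A)E`, one has
`E ≥ (1−A)C/(A(2−A)) + B/√(A(2−A))`, `D ≤ C + B²A/(C + √(A(2−A))·B)`, and
`x_k ≤ (1−A)^k x₀ + D/A ≤ (1−A)^k x₀ + C/A + B²/(C + √(A(2−A))·B)` for all `k ≥ 0`. -/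
theorem recursive_inequality_lemma_refined
    (A B C : ℝ) (hA : 0 < A) (hA1 : A < 1) (hB : 0 ≤ B) (hC : 0 ≤ C)
    (x : ℕ → ℝ) (hx : ∀ k, 0 ≤ x k)
    (hrec : ∀ k : ℕ, (x (k + 1)) ^ 2 ≤ ((1 - A) * x k + C) ^ 2 + B ^ 2)
    (E D : ℝ)
    (hE : E = ((1 - A) * C + Real.sqrt (C ^ 2 + (2 * A - A ^ 2) * B ^ 2)) / (2 * A - A ^ 2))
    (hD : D = Real.sqrt (((1 - A) * E + C) ^ 2 + B ^ 2) - (1 - A) * E) :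
    E ≥ (1 - A) * C / (A * (2 - A)) + B / Real.sqrt (A * (2 - A)) ∧
    D ≤ C + B ^ 2 * A / (C + Real.sqrt (A * (2 - A)) * B) ∧
    ∀ k : ℕ,
      x k ≤ (1 - A) ^ k * x 0 + D / A ∧
      (1 - A) ^ k * x 0 + D / A
        ≤ (1 - A) ^ k * x 0 + C / A + B ^ 2 / (C + Real.sqrt (A * (2 - A)) * B) := by
  have hA2 : A < 2 := by linarith
  have hfix := RecursiveInequality.isFixedPt hA hA2 hC hE
  have hDE : D = A * E := by
    rw [hD, show √(((1 - A) * E + C) ^ 2 + B ^ 2) = E from hfix]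
    ring
  have hDA : D / A = E := by rw [hDE, mul_div_cancel_left₀ _ hA.ne']
  have hupper := RecursiveInequality.upper_bound hA hA2 hB hC hE
  refine ⟨RecursiveInequality.lower_bound hA hA2 hE, ?_, fun k ↦ ⟨?_, ?_⟩⟩
  · calc D = A * E := hDE
      _ ≤ A * (C / A + B ^ 2 / (C + √(A * (2 - A)) * B)) := by gcongr
      _ = C + B ^ 2 * A / (C + √(A * (2 - A)) * B) := by
        rw [mul_add, mul_div_cancel₀ _ hA.ne', mul_div_assoc', mul_comm A]
  · rw [hDA]
    exact le_pow_mul_add_of_isFixedPt (by linarith) hC hfix hx hrec k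
  · rw [hDA]
    linarith
end

section
/- Let A, B, C, D be positive real numbers with D < A < 1, and let {x_k}_{k∈ℕ} be a sequence of positive numbers satisfying x_{k+1} ≤ ((1 − A)²x_k² + B²)^{1/2} + C + D x_k for all k. Then, for every k ≥ 0, x_k ≤ (1 − A + D)^k x₀ + C/(A − D) + B/√((A − D)(2 − A − D)). -/
set_option maxHeartbeats 800000

/-- **Lemma.** Let `A, B, C, D` be positive reals with `D < A < 1` and `{x_k}` a sequence of
positive numbers satisfying `x_{k+1} ≤ ((1 − A)²x_k² + B²)^{1/2} + C + D x_k` for all `k`.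
Then, for every `k ≥ 0`,
`x_k ≤ (1 − A + D)^k x₀ + C/(A − D) + B/√((A − D)(2 − A − D))`. -/
theorem perturbed_recursive_inequality_lemma
    (A B C D : ℝ) (hB : 0 < B) (hC : 0 < C) (hD : 0 < D) (hDA : D < A) (hA1 : A < 1)
    (x : ℕ → ℝ) (hx : ∀ k, 0 < x k)
    (hrec : ∀ k : ℕ,
      x (k + 1) ≤ Real.sqrt ((1 - A) ^ 2 * (x k) ^ 2 + B ^ 2) + C + D * x k) :
    ∀ k : ℕ,
      x k ≤ (1 - A + D) ^ k * x 0 + C / (A - D)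
        + B / Real.sqrt ((A - D) * (2 - A - D)) := by
  have hAD : 0 < A - D := by linarith
  have h2AD : 0 < 2 - A - D := by linarith
  have hq0 : 0 < 1 - A + D := by linarith
  have h1A : 0 < 1 - A := by linarith
  set s : ℝ := Real.sqrt ((A - D) * (2 - A - D)) with hs
  have hspos : 0 < s := Real.sqrt_pos.mpr (by positivity)
  have hs2 : s ^ 2 = (A - D) * (2 - A - D) := Real.sq_sqrt (by positivity)
  set M : ℝ := C / (A - D) + B / s with hM
  have htpos : 0 < B / s := by positivity
  have hMge : B / s ≤ M := by
    have hCpos : 0 < C / (A - D) := by positivity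
    rw [hM]; linarith
  have hMpos : 0 < M := lt_of_lt_of_le htpos hMge
  set E : ℝ := (1 - D) * M - C with hE
  have hEeq : E = (1 - A) * M + (A - D) * (B / s) := by
    rw [hE, hM]; field_simp; ring
  have hEpos : 0 < E := by rw [hEeq]; positivity
  have ht2 : s ^ 2 * (B / s) ^ 2 = B ^ 2 := by field_simp
  have hB2 : (A - D) * (2 - A - D) * (B / s) ^ 2 = B ^ 2 := by
    rw [← hs2]; exact ht2
  have h4 : (B / s) ^ 2 ≤ (B / s) * M := by
    rw [sq]; exact mul_le_mul_of_nonneg_left hMge htpos.le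
  have h5 : (A - D) * (2 * (1 - A)) * ((B / s) ^ 2)
      ≤ (A - D) * (2 * (1 - A)) * ((B / s) * M) :=
    mul_le_mul_of_nonneg_left h4 (by positivity)
  have key : ∀ r : ℝ, 0 ≤ r →
      Real.sqrt ((1 - A) ^ 2 * (r + M) ^ 2 + B ^ 2) ≤ (1 - A) * r + E := by
    intro r hr
    have hRHS : 0 ≤ (1 - A) * r + E :=
      add_nonneg (mul_nonneg h1A.le hr) hEpos.le
    have hcross : 0 ≤ 2 * (1 - A) * (A - D) * (r * (B / s)) :=
      mul_nonneg (by positivity) (mul_nonneg hr htpos.le)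
    have harg : (1 - A) ^ 2 * (r + M) ^ 2 + B ^ 2 ≤ ((1 - A) * r + E) ^ 2 := by
      rw [hEeq]
      nlinarith [hcross, h5, hB2]
    calc Real.sqrt ((1 - A) ^ 2 * (r + M) ^ 2 + B ^ 2)
        ≤ Real.sqrt (((1 - A) * r + E) ^ 2) := Real.sqrt_le_sqrt harg
      _ = (1 - A) * r + E := Real.sqrt_sq hRHS
  intro k
  induction k with
  | zero =>
      simp only [pow_zero, one_mul]
      have hMdef : C / (A - D) + B / s = M := hM.symm
      linarith [hMpos]
  | succ n ih =>
      have hy : x n ≤ (1 - A + D) ^ n * x 0 + M := by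
        rw [hM]; linarith [ih]
      have hr0 : 0 ≤ (1 - A + D) ^ n * x 0 :=
        mul_nonneg (pow_nonneg hq0.le n) (hx 0).le
      have hsq : (x n) ^ 2 ≤ ((1 - A + D) ^ n * x 0 + M) ^ 2 :=
        pow_le_pow_left₀ (hx n).le hy 2
      have hmono : Real.sqrt ((1 - A) ^ 2 * (x n) ^ 2 + B ^ 2)
          ≤ Real.sqrt ((1 - A) ^ 2 * ((1 - A + D) ^ n * x 0 + M) ^ 2 + B ^ 2) := by
        apply Real.sqrt_le_sqrt
        have := mul_le_mul_of_nonneg_left hsq (by positivity : (0:ℝ) ≤ (1 - A) ^ 2)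
        linarith
      have hk := key ((1 - A + D) ^ n * x 0) hr0
      have hsplit : (1 - A + D) ^ (n + 1) * x 0
          = (1 - A) * ((1 - A + D) ^ n * x 0) + D * ((1 - A + D) ^ n * x 0) := by
        rw [pow_succ]; ring
      have hDy : D * x n ≤ D * ((1 - A + D) ^ n * x 0 + M) :=
        mul_le_mul_of_nonneg_left hy hD.le
      have hDy' : D * ((1 - A + D) ^ n * x 0 + M)
          = D * ((1 - A + D) ^ n * x 0) + D * M := by ring
      have hr := hrec n
      have hEdef : E = (1 - D) * M - C := hE
      have hgoal : x (n + 1) ≤ (1 - A + D) ^ (n + 1) * x 0 + M := by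
        rw [hsplit]
        linarith [hr, hmono, hk, hDy, hDy']
      rw [hM] at hgoal
      linarith [hgoal]
end
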